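/- Let g : [0, ∞) → ℝ be Lebesgue integrable with ‖g‖₁ = ∫₀^∞ |g(s)| ds. Let t₁ = τ₁ < τ₂ < ⋯ < τ_M = t_k be real numbers, and let r : ℝ → ℝ be continuous on [t₁, t_k] and differentiable at every point of [t₁, t_k] with |r′(t)| ≤ L for all t ∈ [t₁, t_k]. Define Δr : ℝ → ℝ by Δr(t) = r(t) − r(τ_l) for t ∈ [τ_l, τ_{l+1}) with l = 1, …, M−1, and Δr(t) = 0 for t < t₁ and for t ≥ t_k. Then | ∫₀^∞ g(s) Δr(t_k − s) ds | ≤ ‖g‖₁ · ( max_{1 ≤ l ≤ M−1} (τ_{l+1} − τ_l) ) · L. -/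

import Mathlib

/-! On each sampling interval `[τ l, τ (l+1))` the mean value theorem bounds the ZOH error
`r t - r (τ l)` by `L · (τ (l+1) - τ l)`, and outside `[τ 0, τ M)` the error vanishes, so
`|Δr| ≤ (max_l gap) · L` everywhere. Pulling this uniform bound out of the integral against `|g|`
gives the estimate. -/

open MeasureTheory Set

theorem Fin.exists_mem_Ico_castSucc_succ {α : Type*} [LinearOrder α] {M : ℕ}
    (τ : Fin (M + 1) → α) {t : α} (ht : t ∈ Ico (τ 0) (τ (Fin.last M))) :
    ∃ l : Fin M, t ∈ Ico (τ l.castSucc) (τ l.succ) := by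
  -- clamp `τ` to an `ℕ`-indexed sequence to use the cover of `Ico` by consecutive intervals
  have hcover := Ico_subset_biUnion_Ico M (fun i => τ ⟨min i M, by omega⟩)
  obtain ⟨i, hi, hti⟩ := mem_iUnion₂.1 (hcover (by simpa [Fin.last] using ht))
  rw [Finset.mem_range] at hi
  refine ⟨⟨i, hi⟩, ?_⟩
  simpa [Fin.castSucc, Fin.succ, min_eq_left hi.le, min_eq_left (Nat.succ_le_of_lt hi)] using hti

theorem abs_zoh_error_le {M : ℕ} {τ : Fin (M + 1) → ℝ} (hτ : Monotone τ) {r r' : ℝ → ℝ} {L : ℝ}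
    (hderiv : ∀ t ∈ Icc (τ 0) (τ (Fin.last M)), HasDerivAt r (r' t) t)
    (hL : ∀ t ∈ Icc (τ 0) (τ (Fin.last M)), |r' t| ≤ L) {Δr : ℝ → ℝ}
    (hΔ : ∀ l : Fin M, ∀ t ∈ Ico (τ l.castSucc) (τ l.succ), Δr t = r t - r (τ l.castSucc))
    (hΔlow : ∀ t, t < τ 0 → Δr t = 0) (hΔhigh : ∀ t, τ (Fin.last M) ≤ t → Δr t = 0) (t : ℝ) :
    |Δr t| ≤ (⨆ l : Fin M, (τ l.succ - τ l.castSucc)) * L := by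
  set h := ⨆ l : Fin M, (τ l.succ - τ l.castSucc)
  have hL0 : 0 ≤ L := (abs_nonneg _).trans (hL _ (left_mem_Icc.2 (hτ (Fin.zero_le _))))
  have hgap (l : Fin M) : τ l.succ - τ l.castSucc ≤ h :=
    le_ciSup (f := fun l : Fin M => τ l.succ - τ l.castSucc) (Finite.bddAbove_range _) l
  have hh0 : 0 ≤ h := Real.iSup_nonneg fun l => sub_nonneg.2 (hτ (Fin.castSucc_le_succ l))
  rcases lt_or_ge t (τ 0) with hlow | hlow
  · simpa [hΔlow t hlow] using mul_nonneg hh0 hL0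
  rcases le_or_gt (τ (Fin.last M)) t with hhigh | hhigh
  · simpa [hΔhigh t hhigh] using mul_nonneg hh0 hL0
  obtain ⟨l, hl⟩ := Fin.exists_mem_Ico_castSucc_succ τ ⟨hlow, hhigh⟩
  have hsub : Icc (τ l.castSucc) (τ l.succ) ⊆ Icc (τ 0) (τ (Fin.last M)) :=
    Icc_subset_Icc (hτ (Fin.zero_le _)) (hτ (Fin.le_last _))
  rw [hΔ l t hl]
  calc |r t - r (τ l.castSucc)| ≤ L * (t - τ l.castSucc) :=
        norm_image_sub_le_of_norm_deriv_le_segment' (f := r)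
          (fun x hx => (hderiv x (hsub hx)).hasDerivWithinAt)
          (fun x hx => hL x (hsub (Ico_subset_Icc_self hx))) t (Ico_subset_Icc_self hl)
    _ ≤ L * h := by gcongr; linarith [hl.2, hgap l]
    _ = h * L := mul_comm _ _

theorem abs_integral_mul_le_of_abs_le {α : Type*} [MeasurableSpace α] {μ : Measure α}
    {g f : α → ℝ} (hg : Integrable g μ) {C : ℝ} (hf : ∀ x, |f x| ≤ C) :
    |∫ x, g x * f x ∂μ| ≤ (∫ x, |g x| ∂μ) * C := by
  rw [← Real.norm_eq_abs, ← integral_mul_const C fun x => |g x|]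
  refine norm_integral_le_of_norm_le (hg.abs.mul_const C) (Filter.Eventually.of_forall fun x => ?_)
  rw [Real.norm_eq_abs, abs_mul]
  exact mul_le_mul_of_nonneg_left (hf x) (abs_nonneg _)

theorem filtered_zoh_error_bound_general {M : ℕ}
    (g : ℝ → ℝ) (hg : IntegrableOn g (Set.Ici (0 : ℝ)))
    (τ : Fin (M + 1) → ℝ) (hτ : StrictMono τ)
    (r r' : ℝ → ℝ) (L : ℝ)
    (hderiv : ∀ t ∈ Set.Icc (τ 0) (τ (Fin.last M)), HasDerivAt r (r' t) t)
    (hL : ∀ t ∈ Set.Icc (τ 0) (τ (Fin.last M)), |r' t| ≤ L)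
    (Δr : ℝ → ℝ)
    (hΔ : ∀ l : Fin M, ∀ t ∈ Set.Ico (τ l.castSucc) (τ l.succ),
      Δr t = r t - r (τ l.castSucc))
    (hΔlow : ∀ t, t < τ 0 → Δr t = 0)
    (hΔhigh : ∀ t, τ (Fin.last M) ≤ t → Δr t = 0) :
    |∫ s in Set.Ici (0 : ℝ), g s * Δr (τ (Fin.last M) - s)| ≤
      (∫ s in Set.Ici (0 : ℝ), |g s|) *
        (⨆ l : Fin M, (τ l.succ - τ l.castSucc)) * L := by
  rw [mul_assoc]
  exact abs_integral_mul_le_of_abs_le hg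
    fun s => abs_zoh_error_le hτ.monotone hderiv hL hΔ hΔlow hΔhigh _

/-- **Bound on the output of a causal stable filter driven by the ZOH interpolation error.**
Let `g` be integrable on `[0,∞)`, let `τ 0 < ⋯ < τ M` be sampling instants, and let `r`
be continuous and differentiable on `[τ 0, τ M]` with `|r'| ≤ L` there. If `Δr` is the
ZOH interpolation error of `r` (and `0` outside `[τ 0, τ M)`), then
`|∫₀^∞ g(s) Δr(t_k − s) ds| ≤ ‖g‖₁ · (max_l (τ (l+1) − τ l)) · L`, where `t_k = τ M`. -/
theorem filtered_zoh_error_bound {M : ℕ} (hM : 0 < M)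
    (g : ℝ → ℝ) (hg : IntegrableOn g (Set.Ici (0 : ℝ)))
    (τ : Fin (M + 1) → ℝ) (hτ : StrictMono τ)
    (r r' : ℝ → ℝ) (L : ℝ)
    (hcont : ContinuousOn r (Set.Icc (τ 0) (τ (Fin.last M))))
    (hderiv : ∀ t ∈ Set.Icc (τ 0) (τ (Fin.last M)), HasDerivAt r (r' t) t)
    (hL : ∀ t ∈ Set.Icc (τ 0) (τ (Fin.last M)), |r' t| ≤ L)
    (Δr : ℝ → ℝ)
    (hΔ : ∀ l : Fin M, ∀ t ∈ Set.Ico (τ l.castSucc) (τ l.succ),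
      Δr t = r t - r (τ l.castSucc))
    (hΔlow : ∀ t, t < τ 0 → Δr t = 0)
    (hΔhigh : ∀ t, τ (Fin.last M) ≤ t → Δr t = 0) :
    |∫ s in Set.Ici (0 : ℝ), g s * Δr (τ (Fin.last M) - s)| ≤
      (∫ s in Set.Ici (0 : ℝ), |g s|) *
        (⨆ l : Fin M, (τ l.succ - τ l.castSucc)) * L :=
  filtered_zoh_error_bound_general g hg τ hτ r r' L hderiv hL Δr hΔ hΔlow hΔhigh
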